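/- If there is a cofinal subset of (ω^ω, ≤*) order-isomorphic to ω_k × ω_n with k ≤ n, then 𝔟 = ℵ_k and 𝔡 = ℵ_n; moreover the image of {0} × ω_n under the isomorphism is an unbounded ω_n-chain in (ω^ω, ≤*). -/

import Mathlib

/-! Along the cofinal embedding `e`, a family of functions is `≤*`-bounded as soon as the points
of `ω_k × ω_n` chosen above its members are bounded, and it is dominating only if those points
are cofinal. By regularity of `ℵ_k ≤ ℵ_n`, fewer than `ℵ_k` points of `ω_k × ω_n` are always
bounded while `ω_k × {β}` and `{α} × ω_n` are not, and a cofinal set of points has a cofinal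
projection to `ω_n`, hence at least `ℵ_n` elements. -/

open Cardinal

/-- `f ≤* g`: eventual domination. -/
def leStar (f g : ℕ → ℕ) : Prop := {i : ℕ | ¬ f i ≤ g i}.Finite

open Set Function

theorem leStar_refl (f : ℕ → ℕ) : leStar f f := by
  simp [leStar]

theorem leStar_trans {f g h : ℕ → ℕ} (hfg : leStar f g) (hgh : leStar g h) : leStar f h :=
  (hfg.union hgh).subset fun i hi => by
    by_contra hc
    simp only [mem_union, mem_ofPred_eq, not_or, not_not] at hc
    exact hi (hc.1.trans hc.2)

section CofinalEmbedding

variable {P : Type*} [PartialOrder P] {e : P → ℕ → ℕ}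

theorem injective_of_le_iff_leStar (hord : ∀ a b, a ≤ b ↔ leStar (e a) (e b)) : Injective e :=
  fun a b h => le_antisymm ((hord a b).2 (h ▸ leStar_refl _)) ((hord b a).2 (h ▸ leStar_refl _))

structure IsLeStarCofinalEmbedding (e : P → ℕ → ℕ) : Prop where
  le_iff_leStar : ∀ a b, a ≤ b ↔ leStar (e a) (e b)
  exists_leStar : ∀ f : ℕ → ℕ, ∃ x, leStar f (e x)

namespace IsLeStarCofinalEmbedding

theorem not_exists_leStar_bound_of_not_bddAbove (he : IsLeStarCofinalEmbedding e) {ι : Type*}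
    {g : ι → P} (hg : ¬ BddAbove (range g)) : ¬ ∃ b : ℕ → ℕ, ∀ i, leStar (e (g i)) b := by
  rintro ⟨b, hb⟩
  obtain ⟨x, hx⟩ := he.exists_leStar b
  exact hg ⟨x, forall_mem_range.2 fun i => (he.le_iff_leStar _ _).2 (leStar_trans (hb i) hx)⟩

theorem exists_leStar_bound_of_bddAbove (he : IsLeStarCofinalEmbedding e) {S : Set (ℕ → ℕ)}
    (hS : ∀ x : S → P, BddAbove (range x)) : ∃ b : ℕ → ℕ, ∀ f ∈ S, leStar f b := by
  choose x hx using fun f : S => he.exists_leStar f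
  obtain ⟨p, hp⟩ := hS x
  exact ⟨e p, fun f hf =>
    leStar_trans (hx ⟨f, hf⟩) ((he.le_iff_leStar _ _).1 (hp (mem_range_self _)))⟩

theorem exists_isCofinal_range_of_dominating (he : IsLeStarCofinalEmbedding e)
    {D : Set (ℕ → ℕ)} (hD : ∀ f : ℕ → ℕ, ∃ g ∈ D, leStar f g) :
    ∃ x : D → P, IsCofinal (range x) := by
  choose x hx using fun f : D => he.exists_leStar f
  refine ⟨x, fun p => ?_⟩
  obtain ⟨g, hg, hpg⟩ := hD (e p)
  exact ⟨x ⟨g, hg⟩, mem_range_self _,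
    (he.le_iff_leStar _ _).2 (leStar_trans hpg (hx ⟨g, hg⟩))⟩

end IsLeStarCofinalEmbedding

end CofinalEmbedding

section Aleph

theorem isRegular_aleph_natCast (m : ℕ) : (ℵ_ m).IsRegular := by
  cases m with
  | zero => simpa using isRegular_aleph0
  | succ m => exact_mod_cast isRegular_aleph_add_one m

instance (m : ℕ) : Nonempty (ℵ_ m).ord.ToType :=
  nonempty_ord_toType (aleph_pos _).ne'

instance (m : ℕ) : NoMaxOrder (ℵ_ m).ord.ToType :=
  Cardinal.noMaxOrder (aleph0_le_aleph _)

theorem mk_toType_aleph (m : ℕ) : #(ℵ_ m).ord.ToType = ℵ_ m := by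
  simp

theorem mk_range_eq_aleph_of_injective {α : Type*} {β : Type*} {f : α → β} (hf : Injective f)
    {m : ℕ} (hα : #α = ℵ_ m) : #(range f) = ℵ_ m :=
  lift_eq_aleph_natCast.1 ((mk_range_eq_of_injective hf).trans (by simp [hα]))

theorem not_isCofinal_of_mk_lt {m : ℕ} {s : Set (ℵ_ m).ord.ToType} (hs : #s < ℵ_ m) :
    ¬ IsCofinal s := fun hcof =>
  (Order.cof_le hcof).not_gt (by rwa [Ordinal.cof_toType, (isRegular_aleph_natCast m).cof_ord])

theorem not_isCofinal_range_of_mk_lt {m : ℕ} {ι : Type*} (f : ι → (ℵ_ m).ord.ToType)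
    (hι : #ι < ℵ_ m) : ¬ IsCofinal (range f) := by
  refine not_isCofinal_of_mk_lt (lift_lt.1 ?_)
  calc _ ≤ lift #ι := mk_range_le_lift
    _ < _ := by simpa using hι

end Aleph

section Product

theorem not_bddAbove_range_mk_left {α β : Type*} [Preorder α] [Preorder β] [NoMaxOrder α]
    (b : β) : ¬ BddAbove (range fun a : α => (a, b)) := fun ⟨p, hp⟩ => by
  obtain ⟨a, ha⟩ := exists_gt p.1
  exact ha.not_ge (hp (mem_range_self a)).1

theorem not_bddAbove_range_mk_right {α β : Type*} [Preorder α] [Preorder β] [NoMaxOrder β]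
    (a : α) : ¬ BddAbove (range fun b : β => (a, b)) := fun ⟨p, hp⟩ => by
  obtain ⟨b, hb⟩ := exists_gt p.2
  exact hb.not_ge (hp (mem_range_self b)).2

variable {k n : ℕ}

theorem bddAbove_range_of_mk_lt (hkn : k ≤ n) {ι : Type*}
    (x : ι → (ℵ_ k).ord.ToType × (ℵ_ n).ord.ToType) (hι : #ι < ℵ_ k) : BddAbove (range x) := by
  have hιn : #ι < ℵ_ n := hι.trans_le (aleph_le_aleph.2 (by exact_mod_cast hkn))
  rw [bddAbove_range_prod, ← not_isCofinal_iff_bddAbove, ← not_isCofinal_iff_bddAbove]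
  exact ⟨not_isCofinal_range_of_mk_lt _ hι, not_isCofinal_range_of_mk_lt _ hιn⟩

theorem aleph_le_mk_of_isCofinal_range {ι : Type*}
    (x : ι → (ℵ_ k).ord.ToType × (ℵ_ n).ord.ToType) (hx : IsCofinal (range x)) : ℵ_ n ≤ #ι := by
  by_contra! hι
  refine not_isCofinal_range_of_mk_lt (Prod.snd ∘ x) hι ?_
  rw [range_comp]
  exact hx.image monotone_snd (by simp)

theorem mk_prod_toType_aleph (hkn : k ≤ n) :
    #((ℵ_ k).ord.ToType × (ℵ_ n).ord.ToType) = ℵ_ n := by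
  simp [aleph_mul_aleph, hkn]

end Product

theorem stmt17_general (k n : ℕ) (hkn : k ≤ n)
    (e : (aleph k).ord.ToType × (aleph n).ord.ToType → ℕ → ℕ)
    (hord : ∀ a b, a ≤ b ↔ leStar (e a) (e b))
    (hcof : ∀ f : ℕ → ℕ, ∃ x, leStar f (e x)) :
    ((∃ S : Set (ℕ → ℕ), (¬ ∃ b : ℕ → ℕ, ∀ f ∈ S, leStar f b) ∧ #S = aleph k) ∧
      ∀ S : Set (ℕ → ℕ), (¬ ∃ b : ℕ → ℕ, ∀ f ∈ S, leStar f b) → aleph k ≤ #S) ∧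
    ((∃ S : Set (ℕ → ℕ), (∀ f : ℕ → ℕ, ∃ g ∈ S, leStar f g) ∧ #S = aleph n) ∧
      ∀ S : Set (ℕ → ℕ), (∀ f : ℕ → ℕ, ∃ g ∈ S, leStar f g) → aleph n ≤ #S) ∧
    ∀ x0 : (aleph k).ord.ToType, (∀ w, x0 ≤ w) →
      (¬ ∃ b : ℕ → ℕ, ∀ β : (aleph n).ord.ToType, leStar (e (x0, β)) b) ∧
      Function.Injective (fun β : (aleph n).ord.ToType => e (x0, β)) ∧
      ∀ β β' : (aleph n).ord.ToType, β ≤ β' → leStar (e (x0, β)) (e (x0, β')) := by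
  have he : IsLeStarCofinalEmbedding e := ⟨hord, hcof⟩
  have hinj : Injective e := injective_of_le_iff_leStar hord
  obtain ⟨β₀⟩ : Nonempty (ℵ_ n).ord.ToType := inferInstance
  refine ⟨⟨⟨range fun α => e (α, β₀), ?_, ?_⟩, fun S hS => ?_⟩,
    ⟨⟨range e, fun f => ?_, ?_⟩, fun D hD => ?_⟩, fun x₀ _ => ⟨?_, ?_, ?_⟩⟩
  · simpa only [forall_mem_range] using
      he.not_exists_leStar_bound_of_not_bddAbove (not_bddAbove_range_mk_left β₀)
  · exact mk_range_eq_aleph_of_injective (hinj.comp (Prod.mk_left_injective β₀))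
      (mk_toType_aleph k)
  · by_contra! hS'
    exact hS (he.exists_leStar_bound_of_bddAbove fun x => bddAbove_range_of_mk_lt hkn x hS')
  · obtain ⟨x, hx⟩ := hcof f
    exact ⟨e x, mem_range_self x, hx⟩
  · exact mk_range_eq_aleph_of_injective hinj (mk_prod_toType_aleph hkn)
  · obtain ⟨x, hx⟩ := he.exists_isCofinal_range_of_dominating hD
    exact aleph_le_mk_of_isCofinal_range x hx
  · exact he.not_exists_leStar_bound_of_not_bddAbove (not_bddAbove_range_mk_right x₀)
  · exact hinj.comp (Prod.mk_right_injective x₀)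
  · exact fun β β' h => (hord _ _).1 ⟨le_rfl, h⟩

/-- if (ω^ω, ≤*) has a cofinal subset order-isomorphic to ω_k × ω_n
(k ≤ n), then 𝔟 = ℵ_k and 𝔡 = ℵ_n, and the image of {0} × ω_n is an unbounded
ω_n-chain in (ω^ω, ≤*). -/
theorem stmt17 (k n : ℕ) (hkn : k ≤ n)
    (e : (aleph k).ord.ToType × (aleph n).ord.ToType → ℕ → ℕ)
    (hinj : Function.Injective e)
    (hord : ∀ a b, a ≤ b ↔ leStar (e a) (e b))
    (hcof : ∀ f : ℕ → ℕ, ∃ x, leStar f (e x)) :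
    ((∃ S : Set (ℕ → ℕ), (¬ ∃ b : ℕ → ℕ, ∀ f ∈ S, leStar f b) ∧ #S = aleph k) ∧
      ∀ S : Set (ℕ → ℕ), (¬ ∃ b : ℕ → ℕ, ∀ f ∈ S, leStar f b) → aleph k ≤ #S) ∧
    ((∃ S : Set (ℕ → ℕ), (∀ f : ℕ → ℕ, ∃ g ∈ S, leStar f g) ∧ #S = aleph n) ∧
      ∀ S : Set (ℕ → ℕ), (∀ f : ℕ → ℕ, ∃ g ∈ S, leStar f g) → aleph n ≤ #S) ∧
    ∀ x0 : (aleph k).ord.ToType, (∀ w, x0 ≤ w) →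
      (¬ ∃ b : ℕ → ℕ, ∀ β : (aleph n).ord.ToType, leStar (e (x0, β)) b) ∧
      Function.Injective (fun β : (aleph n).ord.ToType => e (x0, β)) ∧
      ∀ β β' : (aleph n).ord.ToType, β ≤ β' → leStar (e (x0, β)) (e (x0, β')) :=
  stmt17_general k n hkn e hord hcof
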